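/- For every finite string W over {A, X, B}, one has |(ABAW)| = |[WABA]|, where |(·)| denotes the cyclic value and |[·]| the locked value in the tight puzzle. -/
import Mathlib


/-!
The "tight puzzle" of Schwartz–Tabachnikov.  Strings over the alphabet `{A, X, B}`;
word list (coefficient, weight): `X (1,0)`, `XA (1,1)`, `XAA (1,1)`, `AXA (2,1)`,
`AAA (-1,1)`, `BA (-1,1)`, `ABA (-1,1)`, `XXA (-1,1)`; in a parsing the word `X` may
never be immediately followed by the word `XA` or the word `BA`.
-/

open scoped Classical

/-- The three-letter alphabet. -/
inductive PLetter | A | X | B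
deriving DecidableEq

/-- Strings over the alphabet. -/
abbrev PWord := List PLetter

/-- The tight puzzle word list. -/
def tightWords : List PWord :=
  [[PLetter.X], [PLetter.X, PLetter.A], [PLetter.X, PLetter.A, PLetter.A],
   [PLetter.A, PLetter.X, PLetter.A], [PLetter.A, PLetter.A, PLetter.A],
   [PLetter.B, PLetter.A], [PLetter.A, PLetter.B, PLetter.A],
   [PLetter.X, PLetter.X, PLetter.A]]

/-- Coefficients of the words of the tight puzzle (`AXA ↦ 2`; `AAA, BA, ABA, XXA ↦ -1`;
`X, XA, XAA ↦ 1`). -/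
def tightCoeff (w : PWord) : ℤ :=
  if w = [PLetter.A, PLetter.X, PLetter.A] then 2
  else if w = [PLetter.A, PLetter.A, PLetter.A] ∨ w = [PLetter.B, PLetter.A] ∨
      w = [PLetter.A, PLetter.B, PLetter.A] ∨ w = [PLetter.X, PLetter.X, PLetter.A] then -1
  else 1

/-- Weights of the words: the word `X` has weight `0`, all other words weight `1`. -/
def wordWt (w : PWord) : ℕ := if w = [PLetter.X] then 0 else 1

/-- The forbidden adjacency: the word `X` immediately followed by `XA` or `BA`. -/
def Bad (u v : PWord) : Prop :=
  u = [PLetter.X] ∧ (v = [PLetter.X, PLetter.A] ∨ v = [PLetter.B, PLetter.A])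

/-- The contribution `coefficient · t^weight ∈ ℤ[t]` of a parsing `L`. -/
noncomputable def parseVal (c : PWord → ℤ) (L : List PWord) : Polynomial ℤ :=
  Polynomial.C ((L.map c).prod) * Polynomial.X ^ ((L.map wordWt).sum)

/-- `L` is a parsing in the tight puzzle: all its words are on the word list and the
forbidden adjacency never occurs. -/
def TightChain (L : List PWord) : Prop :=
  (∀ w ∈ L, w ∈ tightWords) ∧ List.Chain' (fun u v => ¬ Bad u v) L

/-- The *core* of a string: what remains after deleting all leading and trailing `X`s. -/
def core (s : PWord) : PWord :=
  ((s.dropWhile (· == PLetter.X)).reverse.dropWhile (· == PLetter.X)).reverse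

/-- `L` is a parsing of the bi-infinite string `⋯XX·W·XX⋯` (with the infinitely many
padding `X`s parsed as copies of the word `X` and trimmed away): the words of `L`
concatenate to `W` up to padding by `X`s on either side, `L` neither starts nor ends
with the word `X`, and (because of the padding `X`-words on the left) the first word
of `L` is not `XA` or `BA`. -/
def IsOpenParsing (W : PWord) (L : List PWord) : Prop :=
  TightChain L ∧ core L.flatten = core W ∧
  ∀ h : L ≠ [],
    L.head h ≠ [PLetter.X] ∧ L.head h ≠ [PLetter.X, PLetter.A] ∧
    L.head h ≠ [PLetter.B, PLetter.A] ∧ L.getLast h ≠ [PLetter.X]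

/-- `(r, L)` is a parsing of the cyclic string `(W)`: reading the necklace of the
letters of `W` starting at position `r`, the words of `L` concatenate to it, the
forbidden adjacency does not occur (cyclically), and `r < (last word).length`
(so that every parsing of the necklace is counted exactly once). -/
def IsCyclicParsing (W : PWord) (r : ℕ) (L : List PWord) : Prop :=
  TightChain L ∧
  ∃ h : L ≠ [], L.flatten = W.rotate r ∧ r < (L.getLast h).length ∧
    ¬ Bad (L.getLast h) (L.head h)

/-- `L` is a parsing of the locked string `[W]`: the words of `L` concatenate exactly
to `W`, no padding allowed. -/
def IsLockedParsing (W : PWord) (L : List PWord) : Prop :=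
  TightChain L ∧ L.flatten = W

/-- The nine words of both puzzles, as a function (used to enumerate parsings). -/
def wordOf : Fin 9 → PWord :=
  ![[PLetter.X], [PLetter.X, PLetter.A], [PLetter.X, PLetter.A, PLetter.A],
    [PLetter.X, PLetter.B, PLetter.A], [PLetter.A, PLetter.X, PLetter.A],
    [PLetter.A, PLetter.A, PLetter.A], [PLetter.B, PLetter.A],
    [PLetter.A, PLetter.B, PLetter.A], [PLetter.X, PLetter.X, PLetter.A]]

/-- The open value `|W| ∈ ℤ[t]`: the sum of `coefficient · t^weight` over all parsings
of the bi-infinite string `⋯XX·W·XX⋯` (any such parsing consists of at most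
`W.length + 2` words). -/
noncomputable def openVal (W : PWord) : Polynomial ℤ :=
  ∑ k ∈ Finset.range (W.length + 3), ∑ f : Fin k → Fin 9,
    if IsOpenParsing W ((List.ofFn f).map wordOf) then
      parseVal tightCoeff ((List.ofFn f).map wordOf)
    else 0

/-- The cyclic value `|(W)| ∈ ℤ[t]`: the sum of `coefficient · t^weight` over all
parsings of the cyclic string `(W)`. -/
noncomputable def cycVal (W : PWord) : Polynomial ℤ :=
  ∑ r ∈ Finset.range W.length, ∑ k ∈ Finset.range (W.length + 1), ∑ f : Fin k → Fin 9,
    if IsCyclicParsing W r ((List.ofFn f).map wordOf) then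
      parseVal tightCoeff ((List.ofFn f).map wordOf)
    else 0

/-- The locked value `|[W]| ∈ ℤ[t]`: the sum of `coefficient · t^weight` over all
parsings whose concatenation is exactly `W`. -/
noncomputable def lockVal (W : PWord) : Polynomial ℤ :=
  ∑ k ∈ Finset.range (W.length + 1), ∑ f : Fin k → Fin 9,
    if IsLockedParsing W ((List.ofFn f).map wordOf) then
      parseVal tightCoeff ((List.ofFn f).map wordOf)
    else 0

open PLetter

lemma tight_ne_nil : ∀ w ∈ tightWords, w ≠ [] := by decide
lemma tight_len3 : ∀ w ∈ tightWords, w.length ≤ 3 := by decide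
lemma tight_len2 : ∀ w ∈ tightWords, w ≠ [X] → 2 ≤ w.length := by decide
lemma tight_lastB : ∀ w ∈ tightWords, w.getLast? ≠ some B := by decide

/-- If a tight list flattens to something ending in `A`, its last word is not `[X]`
and has length ≥ 2. -/
lemma last_word {M : List PWord} (hM : ∀ w ∈ M, w ∈ tightWords) {V : PWord}
    (hV : M.flatten = V ++ [A]) : ∀ u, M.getLast? = some u → u ≠ [X] ∧ 2 ≤ u.length := by
  rcases M.eq_nil_or_concat' with rfl | ⟨M', u', rfl⟩
  · simp at hV
  · intro u hu
    have huu : u = u' := by simpa using hu.symm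
    subst huu
    have hmem : u ∈ tightWords := hM u (by simp)
    have hux : u ≠ [X] := by
      rintro rfl
      have h2 : M'.flatten ++ [X] = V ++ [A] := by simpa using hV
      have h3 := (List.append_inj' h2 (by simp)).2
      simp at h3
    exact ⟨hux, tight_len2 u hmem hux⟩

lemma not_cyc_nil (V : PWord) (r : ℕ) : ¬ IsCyclicParsing V r [] := by
  rintro ⟨-, h, -⟩; exact h rfl

lemma not_lock_nil (W : PWord) : ¬ IsLockedParsing (W ++ [A, B, A]) [] := by
  rintro ⟨-, h⟩
  simp at h

lemma flatten_ne_nil {M : List PWord} {V : PWord} (hV : M.flatten = V ++ [A]) : M ≠ [] := by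
  rintro rfl; simp at hV

lemma cyc0 (W : PWord) (w : PWord) (M : List PWord) :
    IsCyclicParsing ([A, B, A] ++ W) 0 (w :: M) ↔
      (w = [A, B, A] ∧ IsLockedParsing W M) := by
  constructor
  · rintro ⟨⟨hmem, hchain⟩, -, hflat, -, -⟩
    rw [List.rotate_zero] at hflat
    have hw : w ∈ tightWords := hmem w (by simp)
    have hflat' : w ++ M.flatten = [A, B, A] ++ W := by simpa using hflat
    have hmem' : ∀ v ∈ M, v ∈ tightWords := fun v hv => hmem v (by simp [hv])
    have hchain' := (List.isChain_cons.mp hchain).2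
    fin_cases hw <;>
      first
        | (exfalso; simp at hflat'; done)
        | (refine ⟨by simp, ⟨hmem', hchain'⟩, ?_⟩; simpa using hflat')
  · rintro ⟨rfl, ⟨hmem, hchain⟩, hflat⟩
    have hLmem : ∀ v ∈ ([A,B,A] :: M), v ∈ tightWords := by
      intro v hv
      rcases List.mem_cons.mp hv with rfl | hv
      · decide
      · exact hmem v hv
    have hne : ([A,B,A] :: M) ≠ [] := List.cons_ne_nil _ _
    refine ⟨⟨hLmem, List.isChain_cons.mpr ⟨fun y _ => by simp [Bad], hchain⟩⟩, hne, ?_, ?_, ?_⟩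
    · rw [List.rotate_zero]
      simp [hflat]
    · exact List.length_pos_iff.mpr (tight_ne_nil _ (hLmem _ (List.getLast_mem hne)))
    · simp [Bad]

lemma rot1 (W : PWord) : ([A, B, A] ++ W).rotate 1 = [B, A] ++ (W ++ [A]) := by
  rw [List.rotate_eq_drop_append_take (by simp)]
  simp

lemma cyc1 (W : PWord) (w : PWord) (M : List PWord) :
    IsCyclicParsing ([A, B, A] ++ W) 1 (w :: M) ↔
      (w = [B, A] ∧ IsLockedParsing (W ++ [A]) M) := by
  constructor
  · rintro ⟨⟨hmem, hchain⟩, -, hflat, -, -⟩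
    rw [rot1] at hflat
    have hw : w ∈ tightWords := hmem w (by simp)
    have hflat' : w ++ M.flatten = [B, A] ++ (W ++ [A]) := by simpa using hflat
    have hmem' : ∀ v ∈ M, v ∈ tightWords := fun v hv => hmem v (by simp [hv])
    have hchain' := (List.isChain_cons.mp hchain).2
    fin_cases hw <;>
      first
        | (exfalso; simp at hflat'; done)
        | (refine ⟨by simp, ⟨hmem', hchain'⟩, ?_⟩; simpa using hflat')
  · rintro ⟨rfl, ⟨hmem, hchain⟩, hflat⟩
    have hMne : M ≠ [] := flatten_ne_nil hflat
    have hlast := last_word hmem hflat (M.getLast hMne) (List.getLast?_eq_getLast_of_ne_nil hMne)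
    have hne : ([B, A] :: M) ≠ [] := List.cons_ne_nil _ _
    have hgl : ([B, A] :: M).getLast hne = M.getLast hMne := List.getLast_cons hMne
    refine ⟨⟨?_, List.isChain_cons.mpr ⟨fun y _ => by simp [Bad], hchain⟩⟩, hne, ?_, ?_, ?_⟩
    · intro v hv
      rcases List.mem_cons.mp hv with rfl | hv
      · decide
      · exact hmem v hv
    · rw [rot1]
      simp [hflat]
    · rw [hgl]
      omega
    · rw [hgl]
      simp [Bad, hlast.1]

lemma cyc_big (W : PWord) (r : ℕ) (hr2 : 2 ≤ r) (L : List PWord) :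
    ¬ IsCyclicParsing ([A, B, A] ++ W) r L := by
  rintro ⟨⟨hmem, -⟩, hne, hflat, hlen, -⟩
  have hu : L.getLast hne ∈ tightWords := hmem _ (L.getLast_mem hne)
  have h3 := tight_len3 _ hu
  have hr : r = 2 := by omega
  subst hr
  have hrot : ([A, B, A] ++ W).rotate 2 = ([A] ++ W ++ [A]) ++ [B] := by
    rw [List.rotate_eq_drop_append_take (by simp)]
    simp
  rcases L.eq_nil_or_concat' with rfl | ⟨L', u, rfl⟩
  · exact hne rfl
  · have hmu : u ∈ tightWords := hmem u (by simp)
    have hu0 : u ≠ [] := tight_ne_nil u hmu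
    have h2 : L'.flatten ++ u = ([A] ++ W ++ [A]) ++ [B] := by
      have := hflat.trans hrot
      simpa using this
    have hB : u.getLast? = some B := by
      have := congrArg List.getLast? h2
      rwa [List.getLast?_append_of_ne_nil _ hu0, List.getLast?_concat] at this
    exact tight_lastB u hmu hB

lemma lock_step (W : PWord) (w : PWord) (M : List PWord) :
    IsLockedParsing (W ++ [A, B, A]) (M ++ [w]) ↔
      (w = [A, B, A] ∧ IsLockedParsing W M) ∨ (w = [B, A] ∧ IsLockedParsing (W ++ [A]) M) := by
  constructor
  · rintro ⟨⟨hmem, hchain⟩, hflat⟩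
    have hw : w ∈ tightWords := hmem w (by simp)
    have hmem' : ∀ v ∈ M, v ∈ tightWords := fun v hv => hmem v (by simp [hv])
    have hchain' := (List.isChain_append.mp hchain).1
    have hflat' : w.reverse ++ M.flatten.reverse = [A, B, A] ++ W.reverse := by
      have := congrArg List.reverse hflat
      simpa using this
    fin_cases hw <;>
      first
        | (exfalso; simp at hflat'; done)
        | (refine Or.inl ⟨rfl, ⟨hmem', hchain'⟩, ?_⟩; simp at hflat'
           first
             | exact hflat'
             | simpa using congrArg List.reverse hflat')
        | (refine Or.inr ⟨rfl, ⟨hmem', hchain'⟩, ?_⟩; simp at hflat'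
           first
             | exact hflat'
             | simpa using congrArg List.reverse hflat')
  · rintro (⟨rfl, ⟨hmem, hchain⟩, hflat⟩ | ⟨rfl, ⟨hmem, hchain⟩, hflat⟩)
    · refine ⟨⟨?_, ?_⟩, by simp [hflat]⟩
      · intro v hv
        rcases List.mem_append.mp hv with hv | hv
        · exact hmem v hv
        · simp at hv; subst hv; decide
      · refine List.isChain_append.mpr ⟨hchain, List.isChain_singleton _, ?_⟩
        intro x _ y hy
        simp at hy
        subst hy
        simp [Bad]
    · refine ⟨⟨?_, ?_⟩, by simp [hflat]⟩
      · intro v hv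
        rcases List.mem_append.mp hv with hv | hv
        · exact hmem v hv
        · simp at hv; subst hv; decide
      · refine List.isChain_append.mpr ⟨hchain, List.isChain_singleton _, ?_⟩
        intro x hx y hy
        simp at hy
        subst hy
        simp [Bad, (last_word hmem hflat x hx).1]

lemma sum9 (P Q : Prop) (v : Fin 9 → Polynomial ℤ) :
    (∑ i : Fin 9, if (wordOf i = [A, B, A] ∧ P) ∨ (wordOf i = [B, A] ∧ Q) then v i else 0)
      = (if P then v 7 else 0) + (if Q then v 6 else 0) := by
  have e7 : ∀ i : Fin 9, (wordOf i = [A, B, A]) = (i = 7) := by decide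
  have e6 : ∀ i : Fin 9, (wordOf i = [B, A]) = (i = 6) := by decide
  calc (∑ i : Fin 9, if (wordOf i = [A, B, A] ∧ P) ∨ (wordOf i = [B, A] ∧ Q) then v i else 0)
      = ∑ i : Fin 9, ((if i = 7 then (if P then v i else 0) else 0) +
          (if i = 6 then (if Q then v i else 0) else 0)) := by
        refine Finset.sum_congr rfl fun i _ => ?_
        simp only [e7, e6]
        by_cases h1 : i = 7 <;> by_cases h2 : i = 6 <;> simp_all
    _ = _ := by
        rw [Finset.sum_add_distrib, Finset.sum_ite_eq', Finset.sum_ite_eq']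
        simp

lemma sum9one (w0 : PWord) (j : Fin 9) (hj : ∀ i : Fin 9, (wordOf i = w0) = (i = j))
    (P : Prop) (v : Fin 9 → Polynomial ℤ) :
    (∑ i : Fin 9, if wordOf i = w0 ∧ P then v i else 0) = if P then v j else 0 := by
  calc (∑ i : Fin 9, if wordOf i = w0 ∧ P then v i else 0)
      = ∑ i : Fin 9, (if i = j then (if P then v i else 0) else 0) := by
        refine Finset.sum_congr rfl fun i _ => ?_
        simp only [hj]
        by_cases h1 : i = j <;> simp_all
    _ = _ := by
        rw [Finset.sum_ite_eq']
        simp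

lemma len_le_flatten (L : List PWord) (h : ∀ w ∈ L, w ∈ tightWords) :
    L.length ≤ L.flatten.length := by
  induction L with
  | nil => simp
  | cons w L ih =>
    have h1 : 1 ≤ w.length := List.length_pos_iff.mpr (tight_ne_nil w (h w (by simp)))
    have h2 := ih fun v hv => h v (by simp [hv])
    simp only [List.flatten_cons, List.length_append, List.length_cons]
    omega

lemma parseVal_append (c : PWord → ℤ) (M N : List PWord) :
    parseVal c (M ++ N) = parseVal c M * parseVal c N := by
  unfold parseVal
  rw [List.map_append, List.map_append, List.prod_append, List.sum_append, pow_add, map_mul]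
  ring

lemma parseVal_concat (w : PWord) (M : List PWord) :
    parseVal tightCoeff (M ++ [w]) =
      parseVal tightCoeff M * (Polynomial.C (tightCoeff w) * Polynomial.X ^ wordWt w) := by
  rw [parseVal_append]
  congr 1
  simp [parseVal]

lemma parseVal_cons (w : PWord) (M : List PWord) :
    parseVal tightCoeff (w :: M) =
      parseVal tightCoeff M * (Polynomial.C (tightCoeff w) * Polynomial.X ^ wordWt w) := by
  rw [show w :: M = [w] ++ M from rfl, parseVal_append]
  rw [mul_comm]
  congr 1
  simp [parseVal]

noncomputable def lockSum (V : PWord) (m : ℕ) : Polynomial ℤ :=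
  ∑ k ∈ Finset.range m, ∑ f : Fin k → Fin 9,
    if IsLockedParsing V ((List.ofFn f).map wordOf) then
      parseVal tightCoeff ((List.ofFn f).map wordOf)
    else 0

lemma lockVal_eq_lockSum (V : PWord) : lockVal V = lockSum V (V.length + 1) := rfl

lemma lockSum_eq_lockVal (V : PWord) (m : ℕ) (hm : V.length + 1 ≤ m) :
    lockSum V m = lockVal V := by
  rw [lockVal_eq_lockSum]
  unfold lockSum
  refine (Finset.sum_subset (Finset.range_subset_range.mpr hm) ?_).symm
  intro k _ hk
  rw [Finset.mem_range, not_lt] at hk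
  refine Finset.sum_eq_zero fun f _ => ?_
  rw [if_neg]
  rintro ⟨⟨hmem, -⟩, hflat⟩
  have h1 := len_le_flatten _ hmem
  rw [hflat] at h1
  simp at h1
  omega

lemma ofFn_snoc_map (k : ℕ) (g : Fin k → Fin 9) (i : Fin 9) :
    (List.ofFn (Fin.snoc g i : Fin (k + 1) → Fin 9)).map wordOf
      = (List.ofFn g).map wordOf ++ [wordOf i] := by
  rw [List.ofFn_succ']
  simp [Fin.snoc_castSucc, Fin.snoc_last, List.concat_eq_append]

lemma ofFn_cons_map (k : ℕ) (g : Fin k → Fin 9) (i : Fin 9) :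
    (List.ofFn (Fin.cons i g : Fin (k + 1) → Fin 9)).map wordOf
      = wordOf i :: (List.ofFn g).map wordOf := by
  rw [List.ofFn_succ]
  simp [Fin.cons_zero, Fin.cons_succ]

lemma e7 : ∀ i : Fin 9, (wordOf i = [A, B, A]) = (i = 7) := by decide
lemma e6 : ∀ i : Fin 9, (wordOf i = [B, A]) = (i = 6) := by decide
lemma w7 : wordOf 7 = [A, B, A] := by decide
lemma w6 : wordOf 6 = [B, A] := by decide
lemma cABA : Polynomial.C (tightCoeff [A, B, A]) * Polynomial.X ^ wordWt [A, B, A]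
    = Polynomial.C (-1) * Polynomial.X := by
  have h1 : tightCoeff [A, B, A] = -1 := rfl
  have h2 : wordWt [A, B, A] = 1 := rfl
  rw [h1, h2, pow_one]
lemma cBA : Polynomial.C (tightCoeff [B, A]) * Polynomial.X ^ wordWt [B, A]
    = Polynomial.C (-1) * Polynomial.X := by
  have h1 : tightCoeff [B, A] = -1 := rfl
  have h2 : wordWt [B, A] = 1 := rfl
  rw [h1, h2, pow_one]

lemma lockStep_sum (W : PWord) (m : ℕ) :
    (∑ k ∈ Finset.range (m + 1), ∑ f : Fin k → Fin 9,
        if IsLockedParsing (W ++ [A, B, A]) ((List.ofFn f).map wordOf) then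
          parseVal tightCoeff ((List.ofFn f).map wordOf)
        else 0)
      = (lockSum W m + lockSum (W ++ [A]) m) * (Polynomial.C (-1) * Polynomial.X) := by
  rw [Finset.sum_range_succ']
  have h0 : (∑ f : Fin 0 → Fin 9,
      if IsLockedParsing (W ++ [A, B, A]) ((List.ofFn f).map wordOf) then
        parseVal tightCoeff ((List.ofFn f).map wordOf) else 0) = 0 := by
    refine Finset.sum_eq_zero fun f _ => ?_
    rw [if_neg]
    simpa using not_lock_nil W
  rw [h0, add_zero]
  have key : ∀ k : ℕ, (∑ f : Fin (k + 1) → Fin 9,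
      if IsLockedParsing (W ++ [A, B, A]) ((List.ofFn f).map wordOf) then
        parseVal tightCoeff ((List.ofFn f).map wordOf) else 0)
      = ((∑ g : Fin k → Fin 9,
            if IsLockedParsing W ((List.ofFn g).map wordOf) then
              parseVal tightCoeff ((List.ofFn g).map wordOf) else 0)
        + (∑ g : Fin k → Fin 9,
            if IsLockedParsing (W ++ [A]) ((List.ofFn g).map wordOf) then
              parseVal tightCoeff ((List.ofFn g).map wordOf) else 0))
          * (Polynomial.C (-1) * Polynomial.X) := by
    intro k
    rw [← Equiv.sum_comp (Fin.snocEquiv (fun _ => Fin 9))]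
    rw [Fintype.sum_prod_type]
    have step : ∀ (i : Fin 9) (g : Fin k → Fin 9),
        (if IsLockedParsing (W ++ [A, B, A])
            ((List.ofFn (Fin.snocEquiv (fun _ => Fin 9) (i, g))).map wordOf) then
          parseVal tightCoeff ((List.ofFn (Fin.snocEquiv (fun _ => Fin 9) (i, g))).map wordOf)
        else 0)
        = (if (wordOf i = [A, B, A] ∧ IsLockedParsing W ((List.ofFn g).map wordOf))
              ∨ (wordOf i = [B, A] ∧ IsLockedParsing (W ++ [A]) ((List.ofFn g).map wordOf)) then
            parseVal tightCoeff ((List.ofFn g).map wordOf ++ [wordOf i]) else 0) := by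
      intro i g
      have : (List.ofFn (Fin.snocEquiv (fun _ => Fin 9) (i, g))).map wordOf
          = (List.ofFn g).map wordOf ++ [wordOf i] := by
        rw [show (Fin.snocEquiv (fun _ => Fin 9) (i, g)) = Fin.snoc g i from rfl]
        exact ofFn_snoc_map k g i
      rw [this]
      congr 1
      rw [eq_iff_iff, lock_step]
    calc (∑ i : Fin 9, ∑ g : Fin k → Fin 9,
        if IsLockedParsing (W ++ [A, B, A])
            ((List.ofFn (Fin.snocEquiv (fun _ => Fin 9) (i, g))).map wordOf) then
          parseVal tightCoeff ((List.ofFn (Fin.snocEquiv (fun _ => Fin 9) (i, g))).map wordOf)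
        else 0)
        = ∑ g : Fin k → Fin 9, ∑ i : Fin 9,
            (if (wordOf i = [A, B, A] ∧ IsLockedParsing W ((List.ofFn g).map wordOf))
              ∨ (wordOf i = [B, A] ∧ IsLockedParsing (W ++ [A]) ((List.ofFn g).map wordOf)) then
            parseVal tightCoeff ((List.ofFn g).map wordOf ++ [wordOf i]) else 0) := by
          rw [Finset.sum_comm]
          exact Finset.sum_congr rfl fun g _ => Finset.sum_congr rfl fun i _ => step i g
      _ = _ := by
          rw [add_mul, Finset.sum_mul, Finset.sum_mul, ← Finset.sum_add_distrib]
          refine Finset.sum_congr rfl fun g _ => ?_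
          rw [sum9, w7, w6, parseVal_concat, parseVal_concat, cABA, cBA, ite_mul, ite_mul]
          simp
  calc (∑ k ∈ Finset.range m, ∑ f : Fin (k + 1) → Fin 9,
      if IsLockedParsing (W ++ [A, B, A]) ((List.ofFn f).map wordOf) then
        parseVal tightCoeff ((List.ofFn f).map wordOf) else 0)
      = ∑ k ∈ Finset.range m, ((∑ g : Fin k → Fin 9,
            if IsLockedParsing W ((List.ofFn g).map wordOf) then
              parseVal tightCoeff ((List.ofFn g).map wordOf) else 0)
        + (∑ g : Fin k → Fin 9,
            if IsLockedParsing (W ++ [A]) ((List.ofFn g).map wordOf) then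
              parseVal tightCoeff ((List.ofFn g).map wordOf) else 0))
          * (Polynomial.C (-1) * Polynomial.X) :=
        Finset.sum_congr rfl fun k _ => key k
    _ = _ := by
        rw [← Finset.sum_mul, Finset.sum_add_distrib]
        rfl

lemma cycStep_sum (W : PWord) (m : ℕ) (r : ℕ) (V' : PWord) (w0 : PWord) (j : Fin 9)
    (hj : ∀ i : Fin 9, (wordOf i = w0) = (i = j)) (hw0 : wordOf j = w0)
    (hchar : ∀ (w : PWord) (M : List PWord),
      IsCyclicParsing ([A, B, A] ++ W) r (w :: M) ↔ (w = w0 ∧ IsLockedParsing V' M))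
    (hc : Polynomial.C (tightCoeff w0) * Polynomial.X ^ wordWt w0
      = Polynomial.C (-1) * Polynomial.X) :
    (∑ k ∈ Finset.range (m + 1), ∑ f : Fin k → Fin 9,
        if IsCyclicParsing ([A, B, A] ++ W) r ((List.ofFn f).map wordOf) then
          parseVal tightCoeff ((List.ofFn f).map wordOf)
        else 0)
      = lockSum V' m * (Polynomial.C (-1) * Polynomial.X) := by
  rw [Finset.sum_range_succ']
  have h0 : (∑ f : Fin 0 → Fin 9,
      if IsCyclicParsing ([A, B, A] ++ W) r ((List.ofFn f).map wordOf) then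
        parseVal tightCoeff ((List.ofFn f).map wordOf) else 0) = 0 := by
    refine Finset.sum_eq_zero fun f _ => ?_
    rw [if_neg]
    simpa using not_cyc_nil ([A, B, A] ++ W) r
  rw [h0, add_zero]
  have key : ∀ k : ℕ, (∑ f : Fin (k + 1) → Fin 9,
      if IsCyclicParsing ([A, B, A] ++ W) r ((List.ofFn f).map wordOf) then
        parseVal tightCoeff ((List.ofFn f).map wordOf) else 0)
      = (∑ g : Fin k → Fin 9,
          if IsLockedParsing V' ((List.ofFn g).map wordOf) then
            parseVal tightCoeff ((List.ofFn g).map wordOf) else 0)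
          * (Polynomial.C (-1) * Polynomial.X) := by
    intro k
    rw [← Equiv.sum_comp (Fin.consEquiv (fun _ => Fin 9))]
    rw [Fintype.sum_prod_type]
    have step : ∀ (i : Fin 9) (g : Fin k → Fin 9),
        (if IsCyclicParsing ([A, B, A] ++ W) r
            ((List.ofFn (Fin.consEquiv (fun _ => Fin 9) (i, g))).map wordOf) then
          parseVal tightCoeff ((List.ofFn (Fin.consEquiv (fun _ => Fin 9) (i, g))).map wordOf)
        else 0)
        = (if wordOf i = w0 ∧ IsLockedParsing V' ((List.ofFn g).map wordOf) then
            parseVal tightCoeff (wordOf i :: (List.ofFn g).map wordOf) else 0) := by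
      intro i g
      have hl : (List.ofFn (Fin.consEquiv (fun _ => Fin 9) (i, g))).map wordOf
          = wordOf i :: (List.ofFn g).map wordOf := by
        rw [show (Fin.consEquiv (fun _ => Fin 9) (i, g)) = Fin.cons i g from rfl]
        exact ofFn_cons_map k g i
      rw [hl]
      congr 1
      rw [eq_iff_iff, hchar]
    calc (∑ i : Fin 9, ∑ g : Fin k → Fin 9,
        if IsCyclicParsing ([A, B, A] ++ W) r
            ((List.ofFn (Fin.consEquiv (fun _ => Fin 9) (i, g))).map wordOf) then
          parseVal tightCoeff ((List.ofFn (Fin.consEquiv (fun _ => Fin 9) (i, g))).map wordOf)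
        else 0)
        = ∑ g : Fin k → Fin 9, ∑ i : Fin 9,
            (if wordOf i = w0 ∧ IsLockedParsing V' ((List.ofFn g).map wordOf) then
              parseVal tightCoeff (wordOf i :: (List.ofFn g).map wordOf) else 0) := by
          rw [Finset.sum_comm]
          exact Finset.sum_congr rfl fun g _ => Finset.sum_congr rfl fun i _ => step i g
      _ = _ := by
          rw [Finset.sum_mul]
          refine Finset.sum_congr rfl fun g _ => ?_
          rw [sum9one w0 j hj, hw0, parseVal_cons, hc, ite_mul]
          simp
  calc (∑ k ∈ Finset.range m, ∑ f : Fin (k + 1) → Fin 9,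
      if IsCyclicParsing ([A, B, A] ++ W) r ((List.ofFn f).map wordOf) then
        parseVal tightCoeff ((List.ofFn f).map wordOf) else 0)
      = ∑ k ∈ Finset.range m, (∑ g : Fin k → Fin 9,
          if IsLockedParsing V' ((List.ofFn g).map wordOf) then
            parseVal tightCoeff ((List.ofFn g).map wordOf) else 0)
          * (Polynomial.C (-1) * Polynomial.X) :=
        Finset.sum_congr rfl fun k _ => key k
    _ = _ := by
        rw [← Finset.sum_mul]
        rfl

open PLetter in
/-- For every finite string `W`, `|(ABAW)| = |[WABA]|` (cyclic vs. locked values in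
the tight puzzle). -/
theorem cyclic_ABA (W : PWord) :
    cycVal ([A, B, A] ++ W) = lockVal (W ++ [A, B, A]) := by
  have hlen1 : ([A, B, A] ++ W).length = W.length + 3 := by
    simp only [List.length_append, List.length_cons, List.length_nil]
    omega
  have hlen2 : (W ++ [A, B, A]).length = W.length + 3 := by
    simp only [List.length_append, List.length_cons, List.length_nil]
  unfold cycVal lockVal
  rw [hlen1, hlen2, lockStep_sum]
  have hvanish : ∀ r ∈ Finset.range (W.length + 3), r ∉ Finset.range 2 →
      (∑ k ∈ Finset.range (W.length + 3 + 1), ∑ f : Fin k → Fin 9,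
        if IsCyclicParsing ([A, B, A] ++ W) r ((List.ofFn f).map wordOf) then
          parseVal tightCoeff ((List.ofFn f).map wordOf)
        else 0) = 0 := by
    intro r _ hr2
    rw [Finset.mem_range, not_lt] at hr2
    refine Finset.sum_eq_zero fun k _ => Finset.sum_eq_zero fun f _ => ?_
    rw [if_neg (cyc_big W r hr2 _)]
  rw [← Finset.sum_subset (Finset.range_subset_range.mpr (by omega : 2 ≤ W.length + 3)) hvanish]
  rw [Finset.sum_range_succ, Finset.sum_range_one]
  rw [cycStep_sum W (W.length + 3) 0 W [A, B, A] 7 e7 w7 (cyc0 W) cABA]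
  rw [cycStep_sum W (W.length + 3) 1 (W ++ [A]) [B, A] 6 e6 w6 (cyc1 W) cBA]
  rw [lockSum_eq_lockVal W _ (by omega), lockSum_eq_lockVal (W ++ [A]) _ (by simp)]
  ring
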